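/- arXiv:1510.05423 — 5 statements merged into one kernel-verified Lean document; each statement's English description precedes it below -/
import Mathlib

section
/- If G is a locally compact, σ-compact topological group with no small subgroups (i.e., there exists an identity neighbourhood containing no nontrivial subgroup), and U is a compact identity neighbourhood, then the set K = {Γ ∈ Sub(G) : Γ ∩ U = {1}} is open in the Chabauty topology on the space Sub(G) of closed subgroups of G. -/
/-!
Choose an open symmetric identity neighbourhood `W` with `W * W ⊆ U ∩ V`, where `V` contains no
nontrivial subgroup. If `Γ ∩ U ⊆ W` and `x ∈ Γ ∩ U`, then inductively `xⁿ⁺¹ = xⁿ * x ∈ Γ ∩ U ⊆ W`,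
so by symmetry the whole cyclic group generated by `x` lies in `W ⊆ V`, forcing `x = 1`.
Hence `Γ ∩ U = {1}` exactly when `Γ` misses the compact set `U \ W`, a subbasic Chabauty-open
condition.
-/

open MeasureTheory Topology

/-- The Chabauty topology on the space of closed subgroups of `G`, generated by the sets
`{H : H ∩ K = ∅}` for `K` compact and `{H : H ∩ U ≠ ∅}` for `U` open. -/
instance chabautyTopology {G : Type*} [Group G] [TopologicalSpace G] :
    TopologicalSpace (ClosedSubgroup G) :=
  TopologicalSpace.generateFrom
    ({S | ∃ K : Set G, IsCompact K ∧ S = {H : ClosedSubgroup G | (H : Set G) ∩ K = ∅}} ∪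
     {S | ∃ U : Set G, IsOpen U ∧ S = {H : ClosedSubgroup G | ((H : Set G) ∩ U).Nonempty}})

instance {G : Type*} [Group G] [TopologicalSpace G] :
    MeasurableSpace (ClosedSubgroup G) := borel _

instance {G : Type*} [Group G] [TopologicalSpace G] :
    BorelSpace (ClosedSubgroup G) := ⟨rfl⟩

/-- Conjugation of a closed subgroup: `H ↦ gHg⁻¹`. -/
def conjClosedSubgroup {G : Type*} [Group G] [TopologicalSpace G] [IsTopologicalGroup G]
    (g : G) (H : ClosedSubgroup G) : ClosedSubgroup G where
  toSubgroup := H.toSubgroup.map (MulAut.conj g).toMonoidHom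
  isClosed' := by
    have h : ((H.toSubgroup.map (MulAut.conj g).toMonoidHom : Subgroup G) : Set G)
        = ((Homeomorph.mulLeft g).trans (Homeomorph.mulRight g⁻¹)) '' (H : Set G) := by
      ext x
      simp [Subgroup.mem_map, MulAut.conj, mul_assoc]
      rfl
    show IsClosed ((H.toSubgroup.map (MulAut.conj g).toMonoidHom : Subgroup G) : Set G)
    rw [h, Homeomorph.isClosed_image]
    exact H.isClosed'

open Pointwise

theorem ClosedSubgroup.isOpen_setOf_inter_eq_empty {G : Type*} [Group G] [TopologicalSpace G]
    {K : Set G} (hK : IsCompact K) :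
    IsOpen {H : ClosedSubgroup G | (H : Set G) ∩ K = ∅} :=
  TopologicalSpace.isOpen_generateFrom_of_mem (Or.inl ⟨K, hK, rfl⟩)

namespace Subgroup

variable {G : Type*} [Group G] {Γ : Subgroup G} {U W : Set G}

theorem zpowers_subset_of_inter_subset (hW1 : 1 ∈ W) (hWinv : W⁻¹ = W) (hWU : W * W ⊆ U)
    (hΓ : (Γ : Set G) ∩ U ⊆ W) {x : G} (hxΓ : x ∈ Γ) (hxU : x ∈ U) :
    (zpowers x : Set G) ⊆ W := by
  have hx : x ∈ W := hΓ ⟨hxΓ, hxU⟩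
  have hpow : ∀ n : ℕ, x ^ n ∈ W := by
    intro n
    induction n with
    | zero => simpa using hW1
    | succ n ih =>
      rw [pow_succ]
      exact hΓ ⟨Γ.mul_mem (Γ.pow_mem hxΓ n) hxΓ, hWU (Set.mul_mem_mul ih hx)⟩
  rintro _ ⟨m, rfl⟩
  obtain ⟨n, rfl | rfl⟩ := Int.eq_nat_or_neg m
  · simpa using hpow n
  · rw [← hWinv]
    simpa using hpow n

theorem inter_eq_singleton_one_iff {V : Set G}
    (hV : ∀ H : Subgroup G, (H : Set G) ⊆ V → H = ⊥)
    (hW1 : 1 ∈ W) (hWinv : W⁻¹ = W) (hWUV : W * W ⊆ U ∩ V) :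
    (Γ : Set G) ∩ U = {1} ↔ (Γ : Set G) ∩ U ⊆ W := by
  have hWU : W * W ⊆ U := hWUV.trans Set.inter_subset_left
  have hWV : W ⊆ V := (Set.subset_mul_left W hW1).trans (hWUV.trans Set.inter_subset_right)
  refine ⟨fun h => h ▸ Set.singleton_subset_iff.2 hW1, fun hΓ => ?_⟩
  refine Set.eq_singleton_iff_unique_mem.2 ⟨⟨Γ.one_mem, hWU ⟨1, hW1, 1, hW1, one_mul 1⟩⟩, ?_⟩
  rintro x ⟨hxΓ, hxU⟩
  rw [← zpowers_eq_bot]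
  exact hV _ ((zpowers_subset_of_inter_subset hW1 hWinv hWU hΓ hxΓ hxU).trans hWV)

end Subgroup

theorem exists_isOpen_one_mem_inv_eq_mul_subset {G : Type*} [Group G] [TopologicalSpace G]
    [IsTopologicalGroup G] {U : Set G} (hU : U ∈ 𝓝 (1 : G)) :
    ∃ W : Set G, IsOpen W ∧ (1 : G) ∈ W ∧ W⁻¹ = W ∧ W * W ⊆ U := by
  obtain ⟨W, hWo, hW1, hWU⟩ := exists_open_nhds_one_mul_subset hU
  refine ⟨W ∩ W⁻¹, hWo.inter hWo.inv, ⟨hW1, by simpa using hW1⟩, ?_, ?_⟩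
  · rw [Set.inter_inv, inv_inv, Set.inter_comm]
  · exact (Set.mul_subset_mul Set.inter_subset_left Set.inter_subset_left).trans hWU

theorem chabauty_open_of_NSS_general {G : Type*} [Group G] [TopologicalSpace G] [IsTopologicalGroup G]
    (hNSS : ∃ V ∈ 𝓝 (1 : G), ∀ H : Subgroup G, (H : Set G) ⊆ V → H = ⊥)
    (U : Set G) (hUc : IsCompact U) (hU1 : U ∈ 𝓝 (1 : G)) :
    IsOpen {Γ : ClosedSubgroup G | (Γ : Set G) ∩ U = {1}} := by
  obtain ⟨V, hV, hNSS⟩ := hNSS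
  obtain ⟨W, hWo, hW1, hWinv, hWUV⟩ :=
    exists_isOpen_one_mem_inv_eq_mul_subset (Filter.inter_mem hU1 hV)
  have hK : {Γ : ClosedSubgroup G | (Γ : Set G) ∩ U = {1}} =
      {Γ : ClosedSubgroup G | (Γ : Set G) ∩ (U \ W) = ∅} := by
    ext Γ
    rw [Set.mem_ofPred_eq, Set.mem_ofPred_eq, ← Set.inter_sdiff_assoc, Set.sdiff_eq_empty]
    exact Subgroup.inter_eq_singleton_one_iff hNSS hW1 hWinv hWUV
  rw [hK]
  exact ClosedSubgroup.isOpen_setOf_inter_eq_empty (hUc.diff hWo)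

/-- In a locally compact σ-compact group with no small subgroups, for a compact identity
neighbourhood `U`, the set `{Γ : Γ ∩ U = {1}}` is Chabauty-open. -/
theorem chabauty_open_of_NSS {G : Type*} [Group G] [TopologicalSpace G] [IsTopologicalGroup G] [T2Space G]
    [LocallyCompactSpace G] [SigmaCompactSpace G]
    (hNSS : ∃ V ∈ 𝓝 (1 : G), ∀ H : Subgroup G, (H : Set G) ⊆ V → H = ⊥)
    (U : Set G) (hUc : IsCompact U) (hU1 : U ∈ 𝓝 (1 : G)) :
    IsOpen {Γ : ClosedSubgroup G | (Γ : Set G) ∩ U = {1}} :=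
  chabauty_open_of_NSS_general hNSS U hUc hU1
end

section
/- Let G be a locally compact, σ-compact group with NSS, and let V be an open identity neighbourhood containing no nontrivial subgroups with V·V ⊆ U for a compact identity neighbourhood U. Then a closed subgroup Γ of G intersects U nontrivially if and only if Γ intersects the compact set U \ V. -/
/-!
Suppose `Γ` meets `U` in some `x ≠ 1` but misses `U \ V`. Then `x ∈ V`, and since
`V * V ⊆ U`, the powers of any element of `Γ ∩ V` can never leave `V`: the first one to do so
would lie in `Γ ∩ ((V * V) \ V) ⊆ Γ ∩ (U \ V)`. As the powers of `x` stay in the compact set `U`,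
`x⁻¹` is a limit of powers of `x`, so `x⁻¹ ∈ closure V ⊆ V * V ⊆ U`, hence `x⁻¹ ∈ V` and its
powers stay in `V` as well. Thus `zpowers x ⊆ V`, a nontrivial subgroup inside `V`.
-/

open Filter Set Topology Pointwise

section Monoid

variable {M : Type*} [Monoid M]

theorem pow_mem_of_disjoint_mul_self_diff {S : Submonoid M} {V : Set M} (hV1 : (1 : M) ∈ V)
    (hS : Disjoint (S : Set M) ((V * V) \ V)) {y : M} (hyS : y ∈ S) (hyV : y ∈ V) :
    ∀ n : ℕ, y ^ n ∈ V
  | 0 => by simpa using hV1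
  | n + 1 => by
    by_contra hn
    refine hS.notMem_of_mem_left (pow_mem hyS (n + 1)) ⟨?_, hn⟩
    rw [pow_succ]
    exact mul_mem_mul (pow_mem_of_disjoint_mul_self_diff hV1 hS hyS hyV n) hyV

end Monoid

section Group

variable {G : Type*} [Group G]

theorem zpowers_subset_of_pow_mem {x : G} {V : Set G} (hx : ∀ n : ℕ, x ^ n ∈ V)
    (hxinv : ∀ n : ℕ, x⁻¹ ^ n ∈ V) : (Subgroup.zpowers x : Set G) ⊆ V := by
  rintro _ ⟨k, rfl⟩
  obtain ⟨n, rfl | rfl⟩ := Int.eq_nat_or_neg k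
  · simpa using hx n
  · simpa [zpow_neg, ← inv_pow] using hxinv n

variable [TopologicalSpace G] [IsTopologicalGroup G]

theorem mapClusterPt_zpow_atTop_pow_of_mapClusterPt {x y : G}
    (hy : MapClusterPt y atTop (x ^ · : ℕ → G)) (m : ℤ) :
    MapClusterPt (x ^ m) atTop (x ^ · : ℕ → G) := by
  rw [← mapClusterPt_atTop_zpow_iff_pow] at hy ⊢
  rw [mapClusterPt_iff_frequently] at hy ⊢
  intro W hW
  have hcont : ContinuousAt (fun p : G × G => x ^ m * (p.1⁻¹ * p.2)) (y, y) := by fun_prop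
  have hnear : ∀ᶠ p in 𝓝 y ×ˢ 𝓝 y, x ^ m * (p.1⁻¹ * p.2) ∈ W := by
    rw [← nhds_prod_eq]
    exact hcont.preimage_mem_nhds (by simpa using hW)
  obtain ⟨S, hS, hSW⟩ :=
    (eventually_prod_self_iff (r := fun a b => x ^ m * (a⁻¹ * b) ∈ W)).1 hnear
  have hfreq := frequently_atTop.1 (hy S hS)
  -- `x ^ (m - a + b) = x ^ m * ((x ^ a)⁻¹ * x ^ b)` is close to `x ^ m` once `x ^ a`, `x ^ b` are
  -- both close to `y`, and `b` can be taken as large as we like.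
  refine frequently_atTop.2 fun N => ?_
  obtain ⟨a, -, ha⟩ := hfreq 0
  obtain ⟨b, hb, hb'⟩ := hfreq (N + a - m)
  refine ⟨m - a + b, by omega, ?_⟩
  simpa only [zpow_add, zpow_sub, mul_assoc] using hSW _ ha _ hb'

theorem IsCompact.inv_mem_closure_range_pow {x : G} {U : Set G} (hU : IsCompact U)
    (hxU : range (x ^ · : ℕ → G) ⊆ U) : x⁻¹ ∈ closure (range (x ^ · : ℕ → G)) := by
  obtain ⟨y, -, hy⟩ := hU.exists_mapClusterPt (u := (x ^ · : ℕ → G)) (f := atTop)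
    (le_principal_iff.2 (mem_map.2 (univ_mem' fun n => hxU ⟨n, rfl⟩)))
  have hinv := mapClusterPt_zpow_atTop_pow_of_mapClusterPt hy (-1)
  rw [zpow_neg_one] at hinv
  exact mem_closure_iff_clusterPt.2 (ClusterPt.mono hinv (le_principal_iff.2 range_mem_map))

end Group

theorem meets_nontrivially_iff_meets_compl_general {G : Type*} [Group G] [TopologicalSpace G] [IsTopologicalGroup G]
    (U V : Set G) (hUc : IsCompact U)
    (hVo : IsOpen V) (hV1 : (1 : G) ∈ V) (hVU : V ⊆ U)
    (hVns : ∀ H : Subgroup G, (H : Set G) ⊆ V → H = ⊥)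
    (hVV : V * V ⊆ U)
    (Γ : Subgroup G) :
    (Γ : Set G) ∩ U ≠ {1} ↔ ((Γ : Set G) ∩ (U \ V)).Nonempty := by
  refine ⟨fun hne => ?_, fun ⟨g, hgΓ, hgU, hgV⟩ heq => hgV ?_⟩
  · by_contra hempty
    have hΓV : ∀ x ∈ Γ, x ∈ U → x ∈ V := fun x hxΓ hxU =>
      not_not.1 fun hxV => hempty ⟨x, hxΓ, hxU, hxV⟩
    have hdisj : Disjoint (Γ : Set G) ((V * V) \ V) :=
      Set.disjoint_left.2 fun x hxΓ hx => hx.2 (hΓV x hxΓ (hVV hx.1))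
    have hpow : ∀ y ∈ Γ, y ∈ V → ∀ n : ℕ, y ^ n ∈ V := fun _ hy =>
      pow_mem_of_disjoint_mul_self_diff (S := Γ.toSubmonoid) hV1 hdisj hy
    refine hne (Set.eq_singleton_iff_unique_mem.2 ⟨⟨Γ.one_mem, hVU hV1⟩, ?_⟩)
    rintro x ⟨hxΓ, hxU⟩
    have hxpow := hpow x hxΓ (hΓV x hxΓ hxU)
    have hxinvU : x⁻¹ ∈ U := hVV <| closure_subset_mul_self_of_mem_nhds_one (hVo.mem_nhds hV1) <|
      closure_mono (range_subset_iff.2 hxpow) <|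
        hUc.inv_mem_closure_range_pow (range_subset_iff.2 fun n => hVU (hxpow n))
    have hxinvpow := hpow _ (Γ.inv_mem hxΓ) (hΓV _ (Γ.inv_mem hxΓ) hxinvU)
    simpa using hVns _ (zpowers_subset_of_pow_mem hxpow hxinvpow)
  · have hg : g ∈ ({1} : Set G) := heq ▸ ⟨hgΓ, hgU⟩
    rwa [Set.mem_singleton_iff.1 hg]

/-- If `V ⊆ U` is an open identity neighbourhood containing no nontrivial subgroup with
`V * V ⊆ U`, then a closed subgroup `Γ` meets `U` nontrivially iff it meets `U \ V`. -/
theorem meets_nontrivially_iff_meets_compl {G : Type*} [Group G] [TopologicalSpace G] [IsTopologicalGroup G] [T2Space G]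
    [LocallyCompactSpace G] [SigmaCompactSpace G]
    (U V : Set G) (hUc : IsCompact U) (hU1 : U ∈ 𝓝 (1 : G))
    (hVo : IsOpen V) (hV1 : (1 : G) ∈ V) (hVU : V ⊆ U)
    (hVns : ∀ H : Subgroup G, (H : Set G) ⊆ V → H = ⊥)
    (hVV : V * V ⊆ U)
    (Γ : Subgroup G) (hΓ : IsClosed (Γ : Set G)) :
    (Γ : Set G) ∩ U ≠ {1} ↔ ((Γ : Set G) ∩ (U \ V)).Nonempty :=
  meets_nontrivially_iff_meets_compl_general U V hUc hVo hV1 hVU hVns hVV Γ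
end

section
/- Let G be a locally compact σ-compact group with NSS such that the set IRS_d(G) of invariant random subgroups concentrated on discrete subgroups is compact in the weak-* topology. Then IRS_d(G) is weakly uniformly discrete: for every ε > 0 there is an identity neighbourhood U_ε ⊆ G such that μ({Γ ∈ Sub(G) : Γ ∩ U_ε ≠ {1}}) < ε for every μ ∈ IRS_d(G). -/
open MeasureTheory Topology

open Set Filter
open scoped NNReal ENNReal Pointwise BoundedContinuousFunction

/-! Suppose the conclusion fails for some `ε > 0`. Fix a compactly supported Urysohn function `f`
with `f 1 = 1`, supported in an NSS neighbourhood. For a level `t > 0` the superlevel set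
`{t ≤ f}` contains no nontrivial subgroup, so the powers of any `x ≠ 1` leave it; if `x` is so
close to `1` that left multiplication by `x` moves `f` by less than `t / 2`, the first power
outside lands in the compact band `{t / 2 ≤ f ≤ t}`. With the levels `t = 1 / (i + 1)`, the failure
of the conclusion for a neighbourhood small enough for the first `n` levels thus yields a discrete
IRS giving mass `≥ ε` to the subgroups that meet each of the first `n` bands.

Meeting a compact set is a closed Chabauty condition and meeting an open set an open one, so
continuous test functions squeezed in between, together with the compactness of `IRS_d(G)`, give
one discrete IRS `μ` giving mass `≥ ε` to the subgroups meeting the open set `{0 < f < 2t}`, for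
every level `t`. By continuity from above, a set of `μ`-measure `≥ ε` of subgroups then meets
infinitely many of these sets. But a discrete closed subgroup has only finitely many points in the
compact support of `f`, and each of them lies in only finitely many of these sets. -/

theorem MeasureTheory.le_measure_limsup_atTop {α : Type*} [MeasurableSpace α] {μ : Measure α}
    [IsFiniteMeasure μ] {s : ℕ → Set α} (hs : ∀ i, MeasurableSet (s i)) {ε : ℝ≥0∞}
    (h : ∀ i, ε ≤ μ (s i)) : ε ≤ μ (limsup s atTop) := by
  have hanti : Antitone fun n => ⋃ i ≥ n, s i :=
    fun m n hmn => biUnion_mono (fun i (hi : n ≤ i) => hmn.trans hi) fun _ _ => le_rfl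
  simp only [limsup_eq_iInf_iSup_of_nat, iInf_eq_iInter, iSup_eq_iUnion]
  rw [hanti.measure_iInter
    (fun n => (MeasurableSet.biUnion (to_countable _) fun i _ => hs i).nullMeasurableSet)
    ⟨0, measure_ne_top _ _⟩]
  exact le_iInf fun n => (h n).trans (measure_mono (subset_biUnion_of_mem (u := s) (le_refl n)))

theorem MeasureTheory.measure_limsup_atTop_eq_zero_of_finite {α : Type*} [MeasurableSpace α]
    {μ : Measure α} [IsProbabilityMeasure μ] {s : ℕ → Set α} (hs : ∀ i, MeasurableSet (s i))
    {T : Set α} (hT : μ T = 1) (hfin : ∀ x ∈ T, {i | x ∈ s i}.Finite) :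
    μ (limsup s atTop) = 0 := by
  have hTL : T ⊆ (limsup s atTop)ᶜ := fun x hxT hxL =>
    Nat.frequently_atTop_iff_infinite.1 (mem_limsup_iff_frequently_mem.1 hxL) (hfin x hxT)
  have hcompl : μ (limsup s atTop)ᶜ = 1 := le_antisymm prob_le_one (hT ▸ measure_mono hTL)
  simpa [hcompl] using prob_add_prob_compl (μ := μ) (.measurableSet_limsup hs)

theorem IsCompact.exists_forall_le_lintegral {X : Type*} [TopologicalSpace X] [MeasurableSpace X]
    [OpensMeasurableSpace X] {S : Set (MeasureTheory.ProbabilityMeasure X)} (hS : IsCompact S)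
    (φ : ℕ → X →ᵇ ℝ≥0) {ε : ℝ≥0∞}
    (h : ∀ n, ∃ μ ∈ S, ∀ i ≤ n, ε ≤ ∫⁻ x, φ i x ∂μ) :
    ∃ μ ∈ S, ∀ i, ε ≤ ∫⁻ x, φ i x ∂μ := by
  have hclosed (i : ℕ) : IsClosed {μ : ProbabilityMeasure X | ε ≤ ∫⁻ x, φ i x ∂μ} :=
    isClosed_le continuous_const
      (ProbabilityMeasure.continuous_lintegral_boundedContinuousFunction _)
  obtain ⟨μ, hμS, hμ⟩ := hS.inter_iInter_nonempty _ hclosed fun u => by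
    obtain ⟨μ, hμS, hμ⟩ := h (u.sup id)
    exact ⟨μ, hμS, mem_iInter₂.2 fun i hi => hμ i (u.le_sup (f := id) hi)⟩
  exact ⟨μ, hμS, fun i => mem_iInter.1 hμ i⟩

theorem Filter.Tendsto.finite_setOf_lt {α : Type*} [LinearOrder α] [TopologicalSpace α]
    [OrderTopology α] {a : ℕ → α} {l c : α} (ha : Tendsto a atTop (𝓝 l)) (hc : l < c) :
    {i | c < a i}.Finite := by
  have h := ha.eventually (gt_mem_nhds hc)
  rw [← Nat.cofinite_eq_atTop, eventually_cofinite] at h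
  exact h.subset fun i hi => not_lt.2 hi.le

theorem exists_pow_mem_and_pow_succ_notMem {G : Type*} [Group G] {V Q : Set G}
    (hV : ∀ H : Subgroup G, (H : Set G) ⊆ V → H = ⊥) (hQV : Q ⊆ V ∩ V⁻¹) (h1 : (1 : G) ∈ Q)
    {x : G} (hx : x ≠ 1) : ∃ n : ℕ, x ^ n ∈ Q ∧ x ^ (n + 1) ∉ Q := by
  by_contra! hstep
  have hpow (n : ℕ) : x ^ n ∈ Q := by
    induction n with
    | zero => simpa using h1
    | succ n ih => exact hstep n ih
  refine hx (Subgroup.zpowers_eq_bot.1 (hV _ ?_))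
  rintro _ ⟨k, rfl⟩
  obtain ⟨n, rfl | rfl⟩ := Int.eq_nat_or_neg k
  · simpa using (hQV (hpow n)).1
  · simpa using (hQV (hpow n)).2

theorem Subgroup.inter_preimage_Icc_nonempty {G : Type*} [Group G] {V U : Set G}
    (hV : ∀ H : Subgroup G, (H : Set G) ⊆ V → H = ⊥) {f : G → ℝ} {t d : ℝ}
    (hfV : {x | t ≤ f x} ⊆ V ∩ V⁻¹) (hf1 : t ≤ f 1)
    (hU : ∀ x ∈ U, ∀ y, dist (f (x * y)) (f y) < d) (h1U : (1 : G) ∈ U)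
    {H : Subgroup G} (hHU : (H : Set G) ∩ U ≠ {1}) :
    ((H : Set G) ∩ f ⁻¹' Icc (t - d) t).Nonempty := by
  obtain ⟨x, ⟨hxH, hxU⟩, hx1⟩ : ∃ x ∈ (H : Set G) ∩ U, x ≠ 1 := by
    by_contra! h
    exact hHU (Subset.antisymm (fun x hx => h x hx) (singleton_subset_iff.2 ⟨H.one_mem, h1U⟩))
  obtain ⟨n, hn, hn1⟩ := exists_pow_mem_and_pow_succ_notMem hV hfV hf1 hx1
  have hstep := hU x hxU (x ^ n)
  rw [← pow_succ', Real.dist_eq, abs_lt] at hstep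
  simp only [mem_ofPred_eq, not_le] at hn hn1
  exact ⟨x ^ (n + 1), H.pow_mem hxH _, by linarith, hn1.le⟩

theorem HasCompactSupport.eventually_dist_mul_lt {G β : Type*} [Group G] [TopologicalSpace G]
    [IsTopologicalGroup G] [PseudoMetricSpace β] [Zero β] {f : G → β} (hf : HasCompactSupport f)
    (hc : Continuous f) {δ : ℝ} (hδ : 0 < δ) :
    ∀ᶠ x in 𝓝 (1 : G), ∀ y, dist (f (x * y)) (f y) < δ := by
  let := IsTopologicalGroup.rightUniformSpace G
  obtain ⟨V, hV, hVδ⟩ :=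
    mem_comap.1 (hf.uniformContinuous_of_continuous hc (Metric.dist_mem_uniformity hδ))
  filter_upwards [hV] with x hx y
  exact dist_comm (f y) _ ▸ @hVδ (y, x * y) (by simpa using hx)

theorem exists_escape_bands {G : Type*} [Group G] [TopologicalSpace G] [IsTopologicalGroup G]
    [LocallyCompactSpace G] {V : Set G} (hV : V ∈ 𝓝 1)
    (hNSS : ∀ H : Subgroup G, (H : Set G) ⊆ V → H = ⊥) :
    ∃ (P : Set G) (K O : ℕ → Set G), IsCompact P ∧ (∀ i, IsCompact (K i)) ∧ (∀ i, IsOpen (O i)) ∧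
      (∀ i, K i ⊆ O i) ∧ (∀ i, O i ⊆ P) ∧ (∀ x, {i | x ∈ O i}.Finite) ∧
      ∀ n, ∃ U ∈ 𝓝 (1 : G), ∀ i ≤ n, ∀ H : Subgroup G,
        (H : Set G) ∩ U ≠ {1} → ((H : Set G) ∩ K i).Nonempty := by
  obtain ⟨f, hf1, hf0, hfc, -⟩ := exists_continuous_one_zero_of_isCompact isCompact_singleton
    isOpen_interior.isClosed_compl <| disjoint_compl_right_iff_subset.2 <| singleton_subset_iff.2 <|
      mem_interior_iff_mem_nhds.2 (inter_mem hV (inv_mem_nhds_one G hV))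
  set t : ℕ → ℝ := fun i => 1 / (i + 1)
  have ht (i : ℕ) : 0 < t i := by positivity
  refine ⟨tsupport f, fun i => f ⁻¹' Icc (t i - t i / 2) (t i), fun i => f ⁻¹' Ioo 0 (2 * t i),
    hfc, fun i => hfc.isCompact_preimage f.continuous isClosed_Icc fun h => by linarith [ht i, h.1],
    fun i => isOpen_Ioo.preimage f.continuous,
    fun i x hx => ⟨by linarith [ht i, hx.1], by linarith [ht i, hx.2]⟩,
    fun i x hx => subset_tsupport f hx.1.ne', fun x => ?_, fun n => ?_⟩
  · by_cases hx : 0 < f x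
    · have h2t : Tendsto (fun i => 2 * t i) atTop (𝓝 0) := by
        simpa [t] using tendsto_one_div_add_atTop_nhds_zero_nat.const_mul (2 : ℝ)
      exact (h2t.finite_setOf_lt hx).subset fun i hi => hi.2
    · exact finite_empty.subset fun i hi => hx hi.1
  · have hfV (i : ℕ) : {x | t i ≤ f x} ⊆ V ∩ V⁻¹ := fun x hx =>
      interior_subset (not_not.1 fun h => (ht i).not_ge (by simpa [hf0 h] using hx))
    have hf1t (i : ℕ) : t i ≤ f 1 := by
      rw [show f 1 = 1 from hf1 rfl]
      exact div_le_one_of_le₀ (by simp) (by positivity)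
    set U := {x : G | ∀ i ≤ n, ∀ y, dist (f (x * y)) (f y) < t i / 2}
    have hU : U ∈ 𝓝 1 := (finite_le_nat n).eventually_all.2 fun i _ =>
      hfc.eventually_dist_mul_lt f.continuous (half_pos (ht i))
    exact ⟨U, hU, fun i hi H hH => Subgroup.inter_preimage_Icc_nonempty (U := U) hNSS (hfV i)
      (hf1t i) (fun x hx => hx i hi) (mem_of_mem_nhds hU) hH⟩

namespace ClosedSubgroup

variable {G : Type*} [Group G] [TopologicalSpace G]

theorem isOpen_setOf_inter_nonempty {U : Set G} (hU : IsOpen U) :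
    IsOpen {H : ClosedSubgroup G | ((H : Set G) ∩ U).Nonempty} :=
  TopologicalSpace.isOpen_generateFrom_of_mem (Or.inr ⟨U, hU, rfl⟩)

theorem isClosed_setOf_inter_nonempty {K : Set G} (hK : IsCompact K) :
    IsClosed {H : ClosedSubgroup G | ((H : Set G) ∩ K).Nonempty} := by
  have : IsOpen {H : ClosedSubgroup G | (H : Set G) ∩ K = ∅} :=
    TopologicalSpace.isOpen_generateFrom_of_mem (Or.inl ⟨K, hK, rfl⟩)
  simpa only [← isOpen_compl_iff, compl_ofPred, Set.not_nonempty_iff_eq_empty] using this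

theorem finite_setOf_inter_nonempty {ι : Type*} {H : ClosedSubgroup G}
    (hH : DiscreteTopology H.toSubgroup) {P : Set G} (hP : IsCompact P) {O : ι → Set G}
    (hOP : ∀ i, O i ⊆ P) (hO : ∀ x, {i | x ∈ O i}.Finite) :
    {i | ((H : Set G) ∩ O i).Nonempty}.Finite := by
  have : DiscreteTopology (H : Set G) := hH
  have hHP : ((H : Set G) ∩ P).Finite := (hP.inter_left H.isClosed').finite
    (isDiscrete_iff_discreteTopology.2 (.of_subset this inter_subset_left))
  refine (hHP.biUnion fun x _ => hO x).subset ?_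
  rintro i ⟨x, hxH, hxO⟩
  exact mem_biUnion ⟨hxH, hOP i hxO⟩ hxO

variable {g : G → ℝ≥0}

theorem lowerSemicontinuous_sSup_image (hg : LowerSemicontinuous g) (hb : BddAbove (range g)) :
    LowerSemicontinuous fun H : ClosedSubgroup G => sSup (g '' (H : Set G)) := by
  refine lowerSemicontinuous_iff_isOpen_preimage.2 fun y => ?_
  convert isOpen_setOf_inter_nonempty (hg.isOpen_preimage y) using 1
  ext H
  simp only [mem_preimage, mem_Ioi, mem_ofPred_eq]
  rw [lt_csSup_iff (s := g '' (H : Set G)) (hb.mono (image_subset_range _ _))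
    ⟨g 1, mem_image_of_mem g (one_mem H)⟩]
  simp [Set.Nonempty]

theorem upperSemicontinuous_sSup_image (hg : Continuous g) (hgc : HasCompactSupport g) :
    UpperSemicontinuous fun H : ClosedSubgroup G => sSup (g '' (H : Set G)) := by
  have hb := hg.bddAbove_range_of_hasCompactSupport hgc
  refine upperSemicontinuous_iff_isOpen_preimage.2 fun y => ?_
  have : (fun H : ClosedSubgroup G => sSup (g '' (H : Set G))) ⁻¹' Iio y =
      ⋃ b ∈ Ioo 0 y, {H : ClosedSubgroup G | ((H : Set G) ∩ {x | b ≤ g x}).Nonempty}ᶜ := by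
    ext H
    have hne : (g '' (H : Set G)).Nonempty := ⟨g 1, mem_image_of_mem g (one_mem H)⟩
    simp only [mem_preimage, mem_Iio, mem_iUnion, mem_compl_iff, mem_ofPred_eq, exists_prop,
      Set.not_nonempty_iff_eq_empty, Set.eq_empty_iff_forall_notMem, mem_inter_iff, not_and, not_le]
    constructor
    · intro hlt
      obtain ⟨b, hb1, hb2⟩ := exists_between hlt
      refine ⟨b, ⟨lt_of_le_of_lt zero_le hb1, hb2⟩, fun x hx => ?_⟩
      exact (le_csSup (hb.mono (image_subset_range _ _)) (mem_image_of_mem g hx)).trans_lt hb1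
    · rintro ⟨b, ⟨-, hby⟩, hb⟩
      exact (csSup_le hne (by rintro _ ⟨x, hx, rfl⟩; exact (hb x hx).le)).trans_lt hby
  rw [this]
  exact isOpen_biUnion fun b hb => (isClosed_setOf_inter_nonempty
    (hgc.isCompact_preimage hg isClosed_Ici (not_le.2 hb.1))).isOpen_compl

theorem continuous_sSup_image (hg : Continuous g) (hgc : HasCompactSupport g) :
    Continuous fun H : ClosedSubgroup G => sSup (g '' (H : Set G)) :=
  continuous_iff_lower_upperSemicontinuous.2
    ⟨lowerSemicontinuous_sSup_image hg.lowerSemicontinuous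
      (hg.bddAbove_range_of_hasCompactSupport hgc), upperSemicontinuous_sSup_image hg hgc⟩

variable [RegularSpace G] [LocallyCompactSpace G]

theorem exists_boundedContinuousFunction_sandwich {K O : Set G} (hK : IsCompact K)
    (hO : IsOpen O) (hKO : K ⊆ O) :
    ∃ φ : ClosedSubgroup G →ᵇ ℝ≥0, ∀ μ : Measure (ClosedSubgroup G),
      μ {H | ((H : Set G) ∩ K).Nonempty} ≤ ∫⁻ H, φ H ∂μ ∧
      ∫⁻ H, φ H ∂μ ≤ μ {H | ((H : Set G) ∩ O).Nonempty} := by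
  obtain ⟨f, hfK, hfO, hfc, hf01⟩ := exists_continuous_one_zero_of_isCompact hK
    hO.isClosed_compl (disjoint_compl_right_iff_subset.2 hKO)
  set g : G → ℝ≥0 := fun x => (f x).toNNReal
  have hg1 (x : G) : g x ≤ 1 := Real.toNNReal_le_one.2 (hf01 x).2
  have hgb : BddAbove (range g) := ⟨1, by rintro _ ⟨x, rfl⟩; exact hg1 x⟩
  set φ : ClosedSubgroup G → ℝ≥0 := fun H => sSup (g '' (H : Set G))
  have hφ1 (H : ClosedSubgroup G) : φ H ≤ 1 :=
    csSup_le ⟨g 1, mem_image_of_mem g (one_mem H)⟩ (by rintro _ ⟨x, -, rfl⟩; exact hg1 x)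
  have hφc : Continuous φ :=
    continuous_sSup_image (by fun_prop) (hfc.comp_left Real.toNNReal_zero)
  have hφK (H : ClosedSubgroup G) (hH : ((H : Set G) ∩ K).Nonempty) : 1 ≤ φ H := by
    obtain ⟨x, hxH, hxK⟩ := hH
    calc (1 : ℝ≥0) = g x := by simp [g, hfK hxK]
      _ ≤ φ H := le_csSup (hgb.mono (image_subset_range _ _)) (mem_image_of_mem g hxH)
  have hφO (H : ClosedSubgroup G) (hH : ¬((H : Set G) ∩ O).Nonempty) : φ H = 0 := by
    refine le_antisymm (csSup_le ⟨g 1, mem_image_of_mem g (one_mem H)⟩ ?_) zero_le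
    rintro _ ⟨x, hxH, rfl⟩
    simp [g, hfO (fun hxO => hH ⟨x, hxH, hxO⟩)]
  refine ⟨.mkOfBound ⟨φ, hφc⟩ 1 fun H H' => ?_, fun μ => ⟨?_, ?_⟩⟩
  · exact Real.dist_le_of_mem_Icc_01 ⟨(φ H).2, hφ1 H⟩ ⟨(φ H').2, hφ1 H'⟩
  · rw [← lintegral_indicator_one (isClosed_setOf_inter_nonempty hK).measurableSet]
    refine lintegral_mono fun H => ?_
    change _ ≤ ((φ H : ℝ≥0) : ℝ≥0∞)
    by_cases hH : ((H : Set G) ∩ K).Nonempty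
    · simpa [hH] using hφK H hH
    · simp [hH]
  · rw [← lintegral_indicator_one (isOpen_setOf_inter_nonempty hO).measurableSet]
    refine lintegral_mono fun H => ?_
    change ((φ H : ℝ≥0) : ℝ≥0∞) ≤ _
    by_cases hH : ((H : Set G) ∩ O).Nonempty
    · simpa [hH] using hφ1 H
    · simp [hH, hφO H hH]

end ClosedSubgroup

theorem weakly_uniformly_discrete_of_compact_general {G : Type*} [Group G] [TopologicalSpace G] [IsTopologicalGroup G]
    [LocallyCompactSpace G]
    (hNSS : ∃ V ∈ 𝓝 (1 : G), ∀ H : Subgroup G, (H : Set G) ⊆ V → H = ⊥)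
    (hcpt : IsCompact {μ : ProbabilityMeasure (ClosedSubgroup G) |
      (∀ g : G, μ.toMeasure.map (conjClosedSubgroup g) = μ.toMeasure) ∧
      μ.toMeasure {Γ : ClosedSubgroup G | DiscreteTopology Γ.toSubgroup} = 1}) :
    ∀ ε : ENNReal, 0 < ε → ∃ U ∈ 𝓝 (1 : G), ∀ μ : ProbabilityMeasure (ClosedSubgroup G),
      (∀ g : G, μ.toMeasure.map (conjClosedSubgroup g) = μ.toMeasure) →
      μ.toMeasure {Γ : ClosedSubgroup G | DiscreteTopology Γ.toSubgroup} = 1 →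
      μ.toMeasure {Γ : ClosedSubgroup G | (Γ : Set G) ∩ U ≠ {1}} < ε := by
  intro ε hε
  by_contra! hbad
  obtain ⟨V, hV, hNSS⟩ := hNSS
  obtain ⟨P, K, O, hP, hK, hO, hKO, hOP, hOfin, hescape⟩ := exists_escape_bands hV hNSS
  choose φ hφ using fun i => ClosedSubgroup.exists_boundedContinuousFunction_sandwich
    (hK i) (hO i) (hKO i)
  obtain ⟨μ, ⟨-, hdisc⟩, hμ⟩ := hcpt.exists_forall_le_lintegral φ fun n => by
    obtain ⟨U, hU, hUK⟩ := hescape n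
    obtain ⟨μ, hinv, hdisc, hμ⟩ := hbad U hU
    exact ⟨μ, ⟨hinv, hdisc⟩, fun i hi =>
      (hμ.trans (measure_mono fun Γ => hUK i hi Γ.toSubgroup)).trans (hφ i μ).1⟩
  have hOmeas (i : ℕ) : MeasurableSet {Γ : ClosedSubgroup G | ((Γ : Set G) ∩ O i).Nonempty} :=
    (ClosedSubgroup.isOpen_setOf_inter_nonempty (hO i)).measurableSet
  have hnull := measure_limsup_atTop_eq_zero_of_finite hOmeas hdisc fun Γ hΓ =>
    ClosedSubgroup.finite_setOf_inter_nonempty hΓ hP hOP hOfin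
  exact hε.not_ge (hnull ▸ le_measure_limsup_atTop hOmeas fun i => (hμ i).trans (hφ i μ).2)

/-- If `G` has NSS and the space of discrete IRS's is weak-* compact, then the discrete IRS's are
weakly uniformly discrete. -/
theorem weakly_uniformly_discrete_of_compact {G : Type*} [Group G] [TopologicalSpace G] [IsTopologicalGroup G] [T2Space G]
    [LocallyCompactSpace G] [SigmaCompactSpace G]
    (hNSS : ∃ V ∈ 𝓝 (1 : G), ∀ H : Subgroup G, (H : Set G) ⊆ V → H = ⊥)
    (hcpt : IsCompact {μ : ProbabilityMeasure (ClosedSubgroup G) |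
      (∀ g : G, μ.toMeasure.map (conjClosedSubgroup g) = μ.toMeasure) ∧
      μ.toMeasure {Γ : ClosedSubgroup G | DiscreteTopology Γ.toSubgroup} = 1}) :
    ∀ ε : ENNReal, 0 < ε → ∃ U ∈ 𝓝 (1 : G), ∀ μ : ProbabilityMeasure (ClosedSubgroup G),
      (∀ g : G, μ.toMeasure.map (conjClosedSubgroup g) = μ.toMeasure) →
      μ.toMeasure {Γ : ClosedSubgroup G | DiscreteTopology Γ.toSubgroup} = 1 →
      μ.toMeasure {Γ : ClosedSubgroup G | (Γ : Set G) ∩ U ≠ {1}} < ε :=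
  weakly_uniformly_discrete_of_compact_general hNSS hcpt
end

section
/- Let G be a locally compact σ-compact group such that IRS_d(G) is weakly uniformly discrete. Then there is an identity neighbourhood Ω ⊆ G such that every lattice Γ ≤ G has a conjugate gΓg⁻¹ with gΓg⁻¹ ∩ Ω = {1} (Kazhdan–Margulis theorem). -/
/-!
The orbit map `gΓ ↦ gΓg⁻¹` from `G ⧸ Γ` to the Chabauty space of closed subgroups is
continuous and `G`-equivariant, so it pushes the invariant probability measure of a lattice `Γ`
forward to an invariant random subgroup `μ_Γ`, concentrated on the conjugates of `Γ`, all of them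
discrete. Weak uniform discreteness with `ε = 1` yields `Ω` with `μ_Γ {H | H ∩ Ω ≠ {1}} < 1`;
if every conjugate of `Γ` met `Ω` nontrivially, this set would have full measure.
-/

open MeasureTheory Topology

lemma MeasureTheory.Measure.map_apply_eq_one_of_forall_mem {α β : Type*} [MeasurableSpace α]
    [MeasurableSpace β] {ν : Measure α} [IsProbabilityMeasure ν] {f : α → β}
    (hf : AEMeasurable f ν) {s : Set β} (hs : ∀ x, f x ∈ s) : ν.map f s = 1 := by
  have := isProbabilityMeasure_map hf
  refine le_antisymm prob_le_one ?_
  calc (1 : ENNReal) = ν (f ⁻¹' s) := by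
        rw [Set.eq_univ_of_forall (s := f ⁻¹' s) hs, measure_univ]
    _ ≤ ν.map f s := Measure.le_map_apply hf s

lemma QuotientGroup.measurable_const_smul {G : Type*} [Group G] [MeasurableSpace G]
    [MeasurableMul G] {Γ : Subgroup G} (g : G) : Measurable fun x : G ⧸ Γ => g • x :=
  measurable_from_quotient.2 (measurable_quotient_mk''.comp (measurable_const_mul g))

section Chabauty

variable {G : Type*} [Group G] [TopologicalSpace G]

lemma continuous_closedSubgroup_iff {X : Type*} [TopologicalSpace X] {f : X → ClosedSubgroup G} :
    Continuous f ↔ (∀ K : Set G, IsCompact K → IsOpen {x | (f x : Set G) ∩ K = ∅}) ∧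
      ∀ U : Set G, IsOpen U → IsOpen {x | ((f x : Set G) ∩ U).Nonempty} := by
  refine ⟨fun hf => ⟨fun K hK => ?_, fun U hU => ?_⟩, fun ⟨hK, hU⟩ => ?_⟩
  · exact (TopologicalSpace.isOpen_generateFrom_of_mem (Or.inl ⟨K, hK, rfl⟩)).preimage hf
  · exact (TopologicalSpace.isOpen_generateFrom_of_mem (Or.inr ⟨U, hU, rfl⟩)).preimage hf
  · rw [continuous_generateFrom_iff]
    rintro s (⟨K, hK', rfl⟩ | ⟨U, hU', rfl⟩)
    exacts [hK K hK', hU U hU']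

lemma continuous_closedSubgroup_of_coe_eq_image (e : G ≃ₜ G)
    {Φ : ClosedSubgroup G → ClosedSubgroup G} (hΦ : ∀ H, (Φ H : Set G) = e '' H) :
    Continuous Φ := by
  refine continuous_closedSubgroup_iff.2 ⟨fun K hK => ?_, fun U hU => ?_⟩
  · simp_rw [hΦ, ← Set.not_nonempty_iff_eq_empty, Set.image_inter_nonempty_iff,
      Set.not_nonempty_iff_eq_empty]
    exact continuous_closedSubgroup_iff.1 continuous_id |>.1 _ (e.isCompact_preimage.2 hK)
  · simp_rw [hΦ, Set.image_inter_nonempty_iff]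
    exact continuous_closedSubgroup_iff.1 continuous_id |>.2 _ (hU.preimage e.continuous)

end Chabauty

section Conjugation

variable {G : Type*} [Group G] [TopologicalSpace G] [IsTopologicalGroup G]

def conjHomeomorph (g : G) : G ≃ₜ G :=
  (Homeomorph.mulLeft g).trans (Homeomorph.mulRight g⁻¹)

@[simp]
lemma conjHomeomorph_apply (g x : G) : conjHomeomorph g x = g * x * g⁻¹ :=
  rfl

lemma coe_conjClosedSubgroup (g : G) (H : ClosedSubgroup G) :
    (conjClosedSubgroup g H : Set G) = conjHomeomorph g '' H :=
  Subgroup.coe_map _ _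

lemma mem_conjClosedSubgroup {g x : G} {H : ClosedSubgroup G} :
    x ∈ conjClosedSubgroup g H ↔ g⁻¹ * x * g ∈ H :=
  Subgroup.mem_map_equiv

lemma conjClosedSubgroup_conjClosedSubgroup (g h : G) (H : ClosedSubgroup G) :
    conjClosedSubgroup g (conjClosedSubgroup h H) = conjClosedSubgroup (g * h) H := by
  refine SetLike.ext fun x => ?_
  simp only [mem_conjClosedSubgroup, mul_inv_rev, mul_assoc]

lemma conjClosedSubgroup_of_mem {γ : G} {H : ClosedSubgroup G} (hγ : γ ∈ H) :
    conjClosedSubgroup γ H = H := by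
  refine SetLike.ext fun x => ?_
  rw [mem_conjClosedSubgroup]
  exact ⟨fun h => by simpa [mul_assoc] using mul_mem (mul_mem hγ h) (inv_mem hγ),
    fun h => mul_mem (mul_mem (inv_mem hγ) h) hγ⟩

lemma continuous_conjClosedSubgroup (g : G) :
    Continuous (conjClosedSubgroup g : ClosedSubgroup G → ClosedSubgroup G) :=
  continuous_closedSubgroup_of_coe_eq_image (conjHomeomorph g) (coe_conjClosedSubgroup g)

lemma continuous_conjClosedSubgroup_orbit (H : ClosedSubgroup G) :
    Continuous fun g : G => conjClosedSubgroup g H := by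
  refine continuous_closedSubgroup_iff.2 ⟨fun K hK => ?_, fun U hU => ?_⟩
  · have hK' : {g : G | (conjClosedSubgroup g H : Set G) ∩ K = ∅} =
        {g | ∀ k ∈ K, g⁻¹ * k * g ∈ (H : Set G)ᶜ} := by
      ext g
      simp only [Set.eq_empty_iff_forall_notMem, Set.mem_inter_iff, SetLike.mem_coe,
        mem_conjClosedSubgroup, Set.mem_compl_iff, not_and']
    rw [hK', isOpen_iff_mem_nhds]
    refine fun g hg => hK.eventually_forall_of_forall_eventually fun k hk => ?_
    have hc : Continuous fun p : G × G => p.1⁻¹ * p.2 * p.1 := by fun_prop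
    exact hc.continuousAt.preimage_mem_nhds (H.isClosed'.isOpen_compl.mem_nhds (hg k hk))
  · have hU' : {g : G | ((conjClosedSubgroup g H : Set G) ∩ U).Nonempty} =
        ⋃ γ ∈ H, {g | g * γ * g⁻¹ ∈ U} := by
      ext g
      simp only [coe_conjClosedSubgroup, Set.image_inter_nonempty_iff, conjHomeomorph_apply,
        Set.mem_iUnion, exists_prop]
      rfl
    rw [hU']
    exact isOpen_biUnion fun γ _ => hU.preimage (by fun_prop)

instance discreteTopology_conjClosedSubgroup (g : G) (H : ClosedSubgroup G)
    [DiscreteTopology H.toSubgroup] : DiscreteTopology (conjClosedSubgroup g H).toSubgroup := by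
  have hH : IsDiscrete (H : Set G) := isDiscrete_iff_discreteTopology.2 ‹_›
  have := hH.image (conjHomeomorph g).isInducing
  rw [← coe_conjClosedSubgroup] at this
  exact isDiscrete_iff_discreteTopology.1 this

end Conjugation

section OrbitMap

variable {G : Type*} [Group G] [TopologicalSpace G] [IsTopologicalGroup G] (Γ : ClosedSubgroup G)

def conjOrbitMap : G ⧸ Γ.toSubgroup → ClosedSubgroup G :=
  Quotient.lift (fun g => conjClosedSubgroup g Γ) fun a b hab => by
    rw [← mul_inv_cancel_left a b, ← conjClosedSubgroup_conjClosedSubgroup,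
      conjClosedSubgroup_of_mem (QuotientGroup.leftRel_apply.1 hab)]

lemma conjOrbitMap_smul (g : G) (x : G ⧸ Γ.toSubgroup) :
    conjOrbitMap Γ (g • x) = conjClosedSubgroup g (conjOrbitMap Γ x) := by
  induction x using QuotientGroup.induction_on with
  | H a => exact (conjClosedSubgroup_conjClosedSubgroup g a Γ).symm

variable [MeasurableSpace G] [BorelSpace G]

lemma measurable_conjOrbitMap : Measurable (conjOrbitMap Γ) :=
  measurable_from_quotient.2 (continuous_conjClosedSubgroup_orbit Γ).measurable

lemma map_conjClosedSubgroup_map_conjOrbitMap {ν : Measure (G ⧸ Γ.toSubgroup)}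
    (hν : ∀ g : G, ν.map (g • ·) = ν) (g : G) :
    (ν.map (conjOrbitMap Γ)).map (conjClosedSubgroup g) = ν.map (conjOrbitMap Γ) := by
  have hcomm : conjClosedSubgroup g ∘ conjOrbitMap Γ = conjOrbitMap Γ ∘ (g • ·) :=
    funext fun x => (conjOrbitMap_smul Γ g x).symm
  rw [Measure.map_map (continuous_conjClosedSubgroup g).measurable (measurable_conjOrbitMap Γ),
    hcomm, ← Measure.map_map (measurable_conjOrbitMap Γ) (QuotientGroup.measurable_const_smul g),
    hν g]

end OrbitMap

theorem kazhdan_margulis_general {G : Type*} [Group G] [TopologicalSpace G] [IsTopologicalGroup G] [T2Space G]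
    [MeasurableSpace G] [BorelSpace G]
    (hWUD : ∀ ε : ENNReal, 0 < ε → ∃ U ∈ 𝓝 (1 : G), ∀ μ : Measure (ClosedSubgroup G),
      IsProbabilityMeasure μ →
      (∀ g : G, μ.map (conjClosedSubgroup g) = μ) →
      μ {Γ : ClosedSubgroup G | DiscreteTopology Γ.toSubgroup} = 1 →
      μ {Γ : ClosedSubgroup G | (Γ : Set G) ∩ U ≠ {1}} < ε) :
    ∃ Ω ∈ 𝓝 (1 : G), ∀ Γ : Subgroup G, ∀ _ : DiscreteTopology Γ,
      (∃ ν : Measure (G ⧸ Γ), IsProbabilityMeasure ν ∧ ∀ g : G, ν.map (fun x => g • x) = ν) →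
      ∃ g : G, ((Γ.map (MulAut.conj g).toMonoidHom : Subgroup G) : Set G) ∩ Ω = {1} := by
  obtain ⟨Ω, hΩ, hWUD⟩ := hWUD 1 one_pos
  refine ⟨Ω, hΩ, fun Γ _ ⟨ν, _, hν⟩ => ?_⟩
  let Γc : ClosedSubgroup G := ⟨Γ, Subgroup.isClosed_of_discrete⟩
  have hf := (measurable_conjOrbitMap Γc).aemeasurable (μ := ν)
  have hdisc : ν.map (conjOrbitMap Γc) {H | DiscreteTopology H.toSubgroup} = 1 :=
    Measure.map_apply_eq_one_of_forall_mem hf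
      (QuotientGroup.induction_on · fun g => discreteTopology_conjClosedSubgroup g Γc)
  by_contra! hΩΓ
  have hmeet : ν.map (conjOrbitMap Γc) {H | (H : Set G) ∩ Ω ≠ {1}} = 1 :=
    Measure.map_apply_eq_one_of_forall_mem hf (QuotientGroup.induction_on · hΩΓ)
  exact (hWUD _ (Measure.isProbabilityMeasure_map hf)
    (map_conjClosedSubgroup_map_conjOrbitMap Γc hν) hdisc).ne hmeet

/-- Kazhdan–Margulis: if the discrete IRS's of `G` are weakly uniformly discrete, then there is an
identity neighbourhood `Ω` such that every lattice has a conjugate meeting `Ω` trivially. -/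
theorem kazhdan_margulis {G : Type*} [Group G] [TopologicalSpace G] [IsTopologicalGroup G] [T2Space G]
    [LocallyCompactSpace G] [SigmaCompactSpace G]
    [MeasurableSpace G] [BorelSpace G]
    (hWUD : ∀ ε : ENNReal, 0 < ε → ∃ U ∈ 𝓝 (1 : G), ∀ μ : Measure (ClosedSubgroup G),
      IsProbabilityMeasure μ →
      (∀ g : G, μ.map (conjClosedSubgroup g) = μ) →
      μ {Γ : ClosedSubgroup G | DiscreteTopology Γ.toSubgroup} = 1 →
      μ {Γ : ClosedSubgroup G | (Γ : Set G) ∩ U ≠ {1}} < ε) :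
    ∃ Ω ∈ 𝓝 (1 : G), ∀ Γ : Subgroup G, ∀ _ : DiscreteTopology Γ,
      (∃ ν : Measure (G ⧸ Γ), IsProbabilityMeasure ν ∧ ∀ g : G, ν.map (fun x => g • x) = ν) →
      ∃ g : G, ((Γ.map (MulAut.conj g).toMonoidHom : Subgroup G) : Set G) ∩ Ω = {1} :=
  kazhdan_margulis_general hWUD
end

section
/- Let G be a locally compact, totally disconnected group. The following are equivalent: (a) G has no discrete small subgroups, i.e., some identity neighbourhood contains no nontrivial discrete subgroup; (b) G admits an open torsion-free subgroup; (c) there is an identity neighbourhood U such that every discrete subgroup Γ of G satisfies Γ ∩ U = {1}. -/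
open MeasureTheory Topology

/-- Old Mathlib `Monoid.IsTorsionFree` (removed): no nontrivial element has finite order. -/
def Monoid.IsTorsionFree (G : Type*) [Monoid G] : Prop :=
  ∀ g : G, g ≠ 1 → ¬IsOfFinOrder g

/-!
By van Dantzig, every identity neighbourhood contains a compact open subgroup `K`: it is the
stabilizer of a compact open set under left translation. A discrete subgroup meets `K` in a finite
set, so its elements in `K` are torsion; conversely a torsion element generates a finite, hence
discrete, subgroup. Torsion-freeness of an open subgroup and smallness of discrete subgroups are
therefore the same condition on a small enough compact open subgroup.
-/

open Set
open scoped Pointwise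

theorem exists_isCompact_isClopen_subset {X : Type*} [TopologicalSpace X] [T2Space X]
    [LocallyCompactSpace X] [TotallyDisconnectedSpace X] {x : X} {U : Set X} (hU : U ∈ 𝓝 x) :
    ∃ W, IsCompact W ∧ IsClopen W ∧ x ∈ W ∧ W ⊆ U := by
  obtain ⟨K, hK, hKU, hKc⟩ := local_compact_nhds hU
  obtain ⟨W, hW, hxW, hWK⟩ := loc_compact_Haus_tot_disc_of_zero_dim.mem_nhds_iff.mp hK
  exact ⟨W, hKc.of_isClosed_subset hW.isClosed hWK, hW, hxW, hWK.trans hKU⟩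

section

variable {G : Type*} [Group G] [TopologicalSpace G] [IsTopologicalGroup G]

theorem exists_isCompact_isOpen_subgroup_subset [T2Space G] [LocallyCompactSpace G]
    [TotallyDisconnectedSpace G] {U : Set G} (hU : U ∈ 𝓝 1) :
    ∃ H : Subgroup G, IsCompact (H : Set G) ∧ IsOpen (H : Set G) ∧ (H : Set G) ⊆ U := by
  obtain ⟨W, hWc, hW, h1W, hWU⟩ := exists_isCompact_isClopen_subset hU
  obtain ⟨V, hV, hVW⟩ := compact_open_separated_mul_left hWc hW.isOpen subset_rfl
  have hVW' (v : G) (hv : v ∈ V) : v • W ⊆ W := (smul_set_subset_mul hv).trans hVW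
  set H := MulAction.stabilizer G W
  have hHW : (H : Set G) ⊆ W := fun g hg ↦ by
    have hg1 := smul_mem_smul_set (a := g) h1W
    rwa [MulAction.mem_stabilizer_iff.mp hg, smul_eq_mul, mul_one] at hg1
  have hH : IsOpen (H : Set G) := by
    refine H.isOpen_of_mem_nhds (g := 1)
      (Filter.mem_of_superset (Filter.inter_mem hV (inv_mem_nhds_one G hV)) ?_)
    rintro v ⟨hv, hv'⟩
    exact (hVW' v hv).antisymm (by simpa [subset_smul_set_iff] using hVW' _ hv')
  exact ⟨H, hWc.of_isClosed_subset (H.isClosed_of_isOpen hH) hHW, hH, hHW.trans hWU⟩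

theorem Subgroup.finite_inf_of_isCompact [T2Space G] (Γ K : Subgroup G) [DiscreteTopology Γ]
    (hK : IsCompact (K : Set G)) : Finite ↥(Γ ⊓ K) := by
  have hΓ : IsDiscrete (Γ : Set G) := isDiscrete_iff_discreteTopology.mpr ‹_›
  exact ((hK.inter_left Γ.isClosed_of_discrete).finite (hΓ.mono inter_subset_left)).to_subtype

theorem Subgroup.isOfFinOrder_of_mem_inf_of_isCompact [T2Space G] {Γ K : Subgroup G}
    [DiscreteTopology Γ] (hK : IsCompact (K : Set G)) {x : G} (hx : x ∈ Γ ⊓ K) :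
    IsOfFinOrder x :=
  have := Γ.finite_inf_of_isCompact K hK
  Submonoid.isOfFinOrder_coe.mpr (isOfFinOrder_of_finite (⟨x, hx⟩ : ↥(Γ ⊓ K)))

end

theorem Monoid.IsTorsionFree.eq_one_of_mem {G : Type*} [Group G] {H : Subgroup G}
    (hH : Monoid.IsTorsionFree H) {x : G} (hxH : x ∈ H) (hx : IsOfFinOrder x) : x = 1 := by
  by_contra hx1
  exact hH ⟨x, hxH⟩ (by simpa using hx1) (Submonoid.isOfFinOrder_coe.mp hx)

/-- For a locally compact totally disconnected group `G`, having no discrete small subgroups, the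
existence of an open torsion-free subgroup, and uniform discreteness of the discrete subgroups
are all equivalent. -/
theorem ndss_tfae {G : Type*} [Group G] [TopologicalSpace G] [IsTopologicalGroup G] [T2Space G]
    [LocallyCompactSpace G] [TotallyDisconnectedSpace G] :
    List.TFAE [
      ∃ U ∈ 𝓝 (1 : G), ∀ Γ : Subgroup G, DiscreteTopology Γ → (Γ : Set G) ⊆ U → Γ = ⊥,
      ∃ H : Subgroup G, IsOpen (H : Set G) ∧ Monoid.IsTorsionFree H,
      ∃ U ∈ 𝓝 (1 : G), ∀ Γ : Subgroup G, DiscreteTopology Γ → (Γ : Set G) ∩ U = {1}] := by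
  tfae_have 1 → 2 := by
    rintro ⟨U, hU, hsmall⟩
    obtain ⟨H, -, hH, hHU⟩ := exists_isCompact_isOpen_subgroup_subset hU
    refine ⟨H, hH, fun x hx1 hx ↦ hx1 (Subtype.ext ?_)⟩
    have : Finite (Subgroup.zpowers (x : G)) :=
      (Submonoid.isOfFinOrder_coe.mpr hx).finite_zpowers.to_subtype
    have hxU : (Subgroup.zpowers (x : G) : Set G) ⊆ U :=
      (SetLike.coe_subset_coe.mpr (Subgroup.zpowers_le.mpr x.2)).trans hHU
    exact Subgroup.zpowers_eq_bot.mp (hsmall _ inferInstance hxU)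
  tfae_have 2 → 3 := by
    rintro ⟨H, hH, htf⟩
    obtain ⟨K, hKc, hK, hKH⟩ := exists_isCompact_isOpen_subgroup_subset (hH.mem_nhds H.one_mem)
    refine ⟨K, hK.mem_nhds K.one_mem, fun Γ _ ↦ ?_⟩
    refine subset_antisymm (fun x hx ↦ ?_) (by simp [Γ.one_mem, K.one_mem])
    exact htf.eq_one_of_mem (hKH hx.2) (Subgroup.isOfFinOrder_of_mem_inf_of_isCompact hKc hx)
  tfae_have 3 → 1 := by
    rintro ⟨U, hU, hunif⟩
    refine ⟨U, hU, fun Γ hΓ hΓU ↦ ?_⟩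
    rw [← SetLike.coe_set_eq, Subgroup.coe_bot, ← hunif Γ hΓ, inter_eq_left.mpr hΓU]
  tfae_finish
end
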